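/- Let S be a Gaussian local ring and let 𝔞 be an ideal of S. Then 𝔞² = 0 if and only if a² = 0 for every a ∈ 𝔞. -/

import Mathlib

/-- The content ideal of a polynomial: the ideal generated by its coefficients. -/
def contentIdeal {R : Type*} [CommRing R] (p : Polynomial R) : Ideal R :=
  Ideal.span (Set.range p.coeff)

/-- A commutative ring is Gaussian if the content ideal is multiplicative:
`c(pq) = c(p)c(q)` for all polynomials `p, q`. -/
def IsGaussianRing (R : Type*) [CommRing R] : Prop :=
  ∀ p q : Polynomial R, contentIdeal (p * q) = contentIdeal p * contentIdeal q

/-!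
If `a² = b² = 0`, then `(aT + b)(b - aT) = b² - a²T² = 0`, so in a Gaussian ring the product of
the contents, which contains `a * b`, vanishes. Hence an ideal whose elements square to zero has
zero square.
-/

open Polynomial (C X C_pow C_0)
open scoped Polynomial

section Content

variable {R : Type*} [CommRing R]

@[simp]
theorem contentIdeal_zero : contentIdeal (0 : R[X]) = ⊥ := by
  simp [contentIdeal]

theorem coeff_mem_contentIdeal (p : R[X]) (n : ℕ) : p.coeff n ∈ contentIdeal p :=
  Ideal.subset_span ⟨n, rfl⟩

theorem IsGaussianRing.coeff_mul_coeff_eq_zero (hG : IsGaussianRing R) {p q : R[X]}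
    (hpq : p * q = 0) (i j : ℕ) : p.coeff i * q.coeff j = 0 := by
  have hmem : p.coeff i * q.coeff j ∈ contentIdeal p * contentIdeal q :=
    Ideal.mul_mem_mul (coeff_mem_contentIdeal p i) (coeff_mem_contentIdeal q j)
  rwa [← hG, hpq, contentIdeal_zero, Ideal.mem_bot] at hmem

theorem IsGaussianRing.mul_eq_zero_of_sq_eq_zero (hG : IsGaussianRing R) {a b : R}
    (ha : a ^ 2 = 0) (hb : b ^ 2 = 0) : a * b = 0 := by
  have hpq : (C a * X + C b) * (C b - C a * X) = 0 := by
    have h : (C a * X + C b) * (C b - C a * X) = C (b ^ 2) - C (a ^ 2) * X ^ 2 := by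
      simp only [C_pow]; ring
    rw [h, ha, hb, C_0, zero_mul, sub_zero]
  simpa using hG.coeff_mul_coeff_eq_zero hpq 1 0

end Content

theorem sq_ideal_eq_bot_iff {S : Type*} [CommRing S]
    (hG : IsGaussianRing S) (𝔞 : Ideal S) :
    𝔞 ^ 2 = ⊥ ↔ ∀ a ∈ 𝔞, a ^ 2 = 0 := by
  constructor
  · intro h a ha
    simpa [h] using Ideal.pow_mem_pow ha 2
  · intro h
    rw [pow_two, eq_bot_iff, Ideal.mul_le]
    exact fun a ha b hb => hG.mul_eq_zero_of_sq_eq_zero (h a ha) (h b hb)
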